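/- arXiv:2310.17293 — 2 statements merged into one kernel-verified Lean document; each statement's English description precedes it below -/
import Mathlib

section
/- In the spiked covariance model Σ = θ·β*(β*)ᵀ + I_d with θ > 0 and β* ∈ ℝᵈ a k-sparse unit vector, set Z* = β*(β*)ᵀ. Then for every Z ∈ C = {Z ∈ ℝ^{d×d} : Z ⪰ 0, Tr(Z) = 1}, one has ⟨Σ, Z* − Z⟩ ≥ (θ/2)‖Z* − Z‖₂². -/
set_option autoImplicit false

noncomputable section

/-- The Frobenius inner product `⟨A, Z⟩ = Trace(Zᵀ A)`. -/
def frobInner {d : ℕ} (A Z : Matrix (Fin d) (Fin d) ℝ) : ℝ := ∑ p, ∑ q, A p q * Z p q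

/-- The squared Frobenius norm of a matrix. -/
def frobNormSq {d : ℕ} (A : Matrix (Fin d) (Fin d) ℝ) : ℝ := ∑ p, ∑ q, (A p q) ^ 2

/-!
Write `b = ⟨Z*, Z⟩`. Since `Tr Z* = Tr Z = 1`, the identity part of `Σ` does not see `Z* - Z`, so
`⟨Σ, Z* - Z⟩ = θ (‖Z*‖² - b) = θ (1 - b)`. On the other hand `‖Z* - Z‖² = 1 - 2b + ‖Z‖²`, and for
`Z ⪰ 0` the 2×2 minors give `Z_pq² ≤ Z_pp Z_qq`, whence `‖Z‖² ≤ (Tr Z)² = 1`. Hence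
`‖Z* - Z‖² ≤ 2 (1 - b)`.
-/

open Matrix

theorem Matrix.PosSemidef.sq_apply_le_mul_diag {n : Type*} {Z : Matrix n n ℝ}
    (hZ : Z.PosSemidef) (i j : n) : Z i j ^ 2 ≤ Z i i * Z j j := by
  have hdet := (hZ.submatrix ![i, j]).det_nonneg
  have hsymm : Z j i = Z i j := by simpa using hZ.isHermitian.apply i j
  simp only [det_fin_two, submatrix_apply, cons_val_zero, cons_val_one] at hdet
  rw [hsymm, ← sq] at hdet
  linarith

theorem Matrix.PosSemidef.sum_sq_apply_le_trace_sq {n : Type*} [Fintype n] {Z : Matrix n n ℝ}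
    (hZ : Z.PosSemidef) : ∑ p, ∑ q, Z p q ^ 2 ≤ Z.trace ^ 2 :=
  calc ∑ p, ∑ q, Z p q ^ 2 ≤ ∑ p, ∑ q, Z p p * Z q q :=
        Finset.sum_le_sum fun p _ => Finset.sum_le_sum fun q _ => hZ.sq_apply_le_mul_diag p q
    _ = Z.trace ^ 2 := by rw [← Finset.sum_mul_sum, sq]; rfl

section Frobenius

variable {d : ℕ}

theorem frobInner_comm (A B : Matrix (Fin d) (Fin d) ℝ) : frobInner A B = frobInner B A := by
  simp only [frobInner, mul_comm]

theorem frobInner_add_left (A B Z : Matrix (Fin d) (Fin d) ℝ) :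
    frobInner (A + B) Z = frobInner A Z + frobInner B Z := by
  simp only [frobInner, Matrix.add_apply, add_mul, Finset.sum_add_distrib]

theorem frobInner_smul_left (c : ℝ) (A Z : Matrix (Fin d) (Fin d) ℝ) :
    frobInner (c • A) Z = c * frobInner A Z := by
  simp only [frobInner, Matrix.smul_apply, smul_eq_mul, mul_assoc, Finset.mul_sum]

theorem frobInner_sub_right (A Y Z : Matrix (Fin d) (Fin d) ℝ) :
    frobInner A (Y - Z) = frobInner A Y - frobInner A Z := by
  simp only [frobInner, Matrix.sub_apply, mul_sub, Finset.sum_sub_distrib]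

theorem frobInner_one_left (Z : Matrix (Fin d) (Fin d) ℝ) : frobInner 1 Z = Z.trace := by
  simp [frobInner, one_apply, trace]

theorem frobNormSq_eq_frobInner_self (A : Matrix (Fin d) (Fin d) ℝ) :
    frobNormSq A = frobInner A A := by
  simp only [frobNormSq, frobInner, sq]

theorem frobNormSq_sub (A B : Matrix (Fin d) (Fin d) ℝ) :
    frobNormSq (A - B) = frobNormSq A - 2 * frobInner A B + frobNormSq B := by
  simp only [frobNormSq_eq_frobInner_self, frobInner_sub_right, frobInner_comm (A - B),
    frobInner_comm B A]
  ring

theorem frobNormSq_of_mul (β : Fin d → ℝ) :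
    frobNormSq (of fun i j => β i * β j) = (∑ i, β i ^ 2) ^ 2 := by
  simp only [frobNormSq, of_apply, sq, Finset.sum_mul_sum]
  ring_nf

theorem trace_of_mul (β : Fin d → ℝ) : (of fun i j => β i * β j).trace = ∑ i, β i ^ 2 := by
  simp [trace, sq]

end Frobenius

theorem spiked_model_excess_risk_curvature_general
    (d : ℕ) (θ : ℝ) (hθ : 0 < θ)
    (β : Fin d → ℝ)
    (hunit : ∑ i, (β i) ^ 2 = 1)
    (Zs Sigma : Matrix (Fin d) (Fin d) ℝ)
    (hZs : Zs = Matrix.of fun i j => β i * β j)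
    (hSigma : Sigma = θ • Zs + 1) :
    ∀ Z : Matrix (Fin d) (Fin d) ℝ, Z.PosSemidef → Z.trace = 1 →
      (θ / 2) * frobNormSq (Zs - Z) ≤ frobInner Sigma (Zs - Z) := by
  intro Z hZ htr
  have hZs_norm : frobNormSq Zs = 1 := by rw [hZs, frobNormSq_of_mul, hunit, one_pow]
  have hZs_tr : Zs.trace = 1 := by rw [hZs, trace_of_mul, hunit]
  have hZ_norm : frobNormSq Z ≤ 1 := by
    simpa [frobNormSq, htr] using hZ.sum_sq_apply_le_trace_sq
  have hrisk : frobInner Sigma (Zs - Z) = θ * (1 - frobInner Zs Z) := by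
    rw [hSigma, frobInner_add_left, frobInner_smul_left, frobInner_one_left, trace_sub,
      frobInner_sub_right, ← frobNormSq_eq_frobInner_self, hZs_norm, hZs_tr, htr]
    ring
  rw [hrisk, frobNormSq_sub, hZs_norm]
  linarith [mul_le_mul_of_nonneg_left hZ_norm hθ.le]

/-- Lemma: global curvature of the excess risk in the spiked covariance model.
For `Σ = θ β*(β*)ᵀ + I_d` with `β*` a `k`-sparse unit vector and `Z* = β*(β*)ᵀ`,
every `Z ⪰ 0` with `Tr(Z) = 1` satisfies `⟨Σ, Z* - Z⟩ ≥ (θ/2)‖Z* - Z‖₂²`. -/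
theorem spiked_model_excess_risk_curvature
    (d k : ℕ) (θ : ℝ) (hθ : 0 < θ)
    (β : Fin d → ℝ)
    (hsparse : Nat.card {i : Fin d // β i ≠ 0} ≤ k)
    (hunit : ∑ i, (β i) ^ 2 = 1)
    (Zs Sigma : Matrix (Fin d) (Fin d) ℝ)
    (hZs : Zs = Matrix.of fun i j => β i * β j)
    (hSigma : Sigma = θ • Zs + 1) :
    ∀ Z : Matrix (Fin d) (Fin d) ℝ, Z.PosSemidef → Z.trace = 1 →
      (θ / 2) * frobNormSq (Zs - Z) ≤ frobInner Sigma (Zs - Z) :=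
  spiked_model_excess_risk_curvature_general d θ hθ β hunit Zs Sigma hZs hSigma
end
end

section
/- For the sparse PCA problem with ℓ₁ regularization: let β* ∈ ℝᵈ be a k-sparse unit vector, Z* = β*(β*)ᵀ (so Z* has at most k² nonzero entries), C = {Z ∈ ℝ^{d×d} : Z ⪰ 0, Tr(Z) = 1}, regularization norm ‖·‖₁ (entrywise ℓ₁), and G(Z) = ‖Z‖₂². Let A > 0, δ ∈ (0,1), and write r*(ρ) = r*_{RERM,G}(A,ρ,δ). If ρ > 0 satisfies ρ ≥ 10k√(r*(ρ)), then ρ satisfies the A-sparsity equation, i.e. inf_{Z∈C, ‖Z−Z*‖₁=ρ, ‖Z−Z*‖₂² ≤ r*(ρ)} sup_{Φ∈Γ_{Z*}(ρ)} ⟨Φ, Z−Z*⟩ ≥ (4/5)ρ. -/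
set_option autoImplicit false

open MeasureTheory ProbabilityTheory

noncomputable section

/-- The entrywise `ℓ₁` norm of a matrix. -/
def entrywiseL1 {d : ℕ} (A : Matrix (Fin d) (Fin d) ℝ) : ℝ := ∑ p, ∑ q, |A p q|

/-- The linear loss for sparse PCA: `ℓ_Z(x) = -⟨xxᵀ, Z⟩`. -/
def pcaLoss {d : ℕ} (Z : Matrix (Fin d) (Fin d) ℝ) (x : Fin d → ℝ) : ℝ :=
  -frobInner (Matrix.of fun p q => x p * x q) Z

/-- The excess loss `L_Z = ℓ_Z - ℓ_{Z*}`. -/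
def pcaExc {d : ℕ} (Zs Z : Matrix (Fin d) (Fin d) ℝ) (x : Fin d → ℝ) : ℝ :=
  pcaLoss Z x - pcaLoss Zs x

/-- The excess risk `PL_Z`. -/
def pcaExcRisk {d : ℕ} (P : Measure (Fin d → ℝ)) (Zs Z : Matrix (Fin d) (Fin d) ℝ) : ℝ :=
  ∫ x, pcaExc Zs Z x ∂P

/-- The empirical excess loss `P_N L_Z`. -/
def pcaEmp {Ω : Type*} {N d : ℕ} (X : Fin N → Ω → Fin d → ℝ)
    (Zs Z : Matrix (Fin d) (Fin d) ℝ) (ω : Ω) : ℝ :=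
  (N : ℝ)⁻¹ * ∑ i, pcaExc Zs Z (X i ω)

/-- The complexity fixed point `r*_{RERM,G}(A, ρ, δ)` for sparse PCA, with
`G(Z) = ‖Z‖₂²` and regularization norm `nrm`. -/
def rstarPCA {Ω : Type*} [MeasurableSpace Ω] {N d : ℕ} (μ : Measure Ω)
    (P : Measure (Fin d → ℝ)) (X : Fin N → Ω → Fin d → ℝ)
    (C : Set (Matrix (Fin d) (Fin d) ℝ)) (Zs : Matrix (Fin d) (Fin d) ℝ)
    (nrm : Matrix (Fin d) (Fin d) ℝ → ℝ) (A ρ δ : ℝ) : ℝ :=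
  sInf {r : ℝ | 0 < r ∧
    ENNReal.ofReal (1 - δ) ≤
      μ {ω | ∀ Z ∈ C, nrm (Z - Zs) ≤ ρ → frobNormSq (Z - Zs) ≤ r →
        |pcaExcRisk P Zs Z - pcaEmp X Zs Z ω| ≤ r / (3 * A)}}

/-- The subdifferential of a norm-like functional on matrices at `V`. -/
def msubdiff {d : ℕ} (nrm : Matrix (Fin d) (Fin d) ℝ → ℝ)
    (V : Matrix (Fin d) (Fin d) ℝ) : Set (Matrix (Fin d) (Fin d) ℝ) :=
  {Φ | ∀ Hm : Matrix (Fin d) (Fin d) ℝ, frobInner Φ Hm ≤ nrm (V + Hm) - nrm V}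

/-- `Γ_{Z*}(ρ)`: union of subdifferentials at points within `ρ/20` of `Z*`. -/
def mGamma {d : ℕ} (nrm : Matrix (Fin d) (Fin d) ℝ → ℝ)
    (Zs : Matrix (Fin d) (Fin d) ℝ) (ρ : ℝ) : Set (Matrix (Fin d) (Fin d) ℝ) :=
  ⋃ V ∈ {V : Matrix (Fin d) (Fin d) ℝ | nrm (V - Zs) ≤ ρ / 20}, msubdiff nrm V



/-! The subgradient of `‖·‖₁` at `Z*` that takes the signs of `Z*` on its support `S` and the
signs of `H = Z - Z*` off it pairs with `H` to at least `‖H‖₁ - 2 ‖H_S‖₁`. Since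
`S = supp β* × supp β*` has at most `k²` entries, Cauchy–Schwarz gives
`‖H_S‖₁ ≤ k ‖H‖₂ ≤ k √r* ≤ ρ/10`, so this pairing is at least `(4/5)ρ`. The supremum over
`Γ_{Z*}(ρ)` is a genuine one (not the junk value of `sSup`) because every subgradient of a
subadditive functional pairs with `H` to at most the value of the functional at `H`. -/

open Finset SignType

lemma abs_mul_le_abs_of_abs_le_one {φ : ℝ} (hφ : |φ| ≤ 1) (x : ℝ) : |φ * x| ≤ |x| := by
  rw [abs_mul]
  exact mul_le_of_le_one_left (abs_nonneg x) hφ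

lemma mul_le_abs_add_sub_abs {φ a : ℝ} (hφ : |φ| ≤ 1) (ha : φ * a = |a|) (h : ℝ) :
    φ * h ≤ |a + h| - |a| := by
  linarith [mul_add φ a h, (le_abs_self _).trans (abs_mul_le_abs_of_abs_le_one hφ (a + h))]

lemma abs_signType_coe_le_one (s : SignType) : |(s : ℝ)| ≤ 1 := by
  cases s <;> simp

section Subdifferential

variable {d : ℕ}

lemma frobInner_le_of_mem_msubdiff {nrm : Matrix (Fin d) (Fin d) ℝ → ℝ}
    (hnrm : ∀ V H, nrm (V + H) ≤ nrm V + nrm H) {Φ V : Matrix (Fin d) (Fin d) ℝ}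
    (hΦ : Φ ∈ msubdiff nrm V) (H : Matrix (Fin d) (Fin d) ℝ) : frobInner Φ H ≤ nrm H := by
  linarith [hΦ H, hnrm V H]

lemma bddAbove_image_frobInner_mGamma {nrm : Matrix (Fin d) (Fin d) ℝ → ℝ}
    (hnrm : ∀ V H, nrm (V + H) ≤ nrm V + nrm H) (Zs H : Matrix (Fin d) (Fin d) ℝ) (ρ : ℝ) :
    BddAbove ((fun Φ => frobInner Φ H) '' mGamma nrm Zs ρ) := by
  refine ⟨nrm H, ?_⟩
  rintro _ ⟨Φ, hΦ, rfl⟩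
  simp only [mGamma, Set.mem_iUnion] at hΦ
  obtain ⟨V, -, hΦV⟩ := hΦ
  exact frobInner_le_of_mem_msubdiff hnrm hΦV H

lemma msubdiff_subset_mGamma {nrm : Matrix (Fin d) (Fin d) ℝ → ℝ} {Zs : Matrix (Fin d) (Fin d) ℝ}
    {ρ : ℝ} (h0 : nrm 0 ≤ ρ / 20) : msubdiff nrm Zs ⊆ mGamma nrm Zs ρ := fun _ hΦ =>
  Set.mem_biUnion (x := Zs) (by simpa using h0) hΦ

end Subdifferential

section EntrywiseL1

variable {d : ℕ}

lemma entrywiseL1_nonneg (A : Matrix (Fin d) (Fin d) ℝ) : 0 ≤ entrywiseL1 A := by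
  unfold entrywiseL1
  positivity

@[simp]
lemma entrywiseL1_zero : entrywiseL1 (0 : Matrix (Fin d) (Fin d) ℝ) = 0 := by
  simp [entrywiseL1]

lemma entrywiseL1_add_le (V H : Matrix (Fin d) (Fin d) ℝ) :
    entrywiseL1 (V + H) ≤ entrywiseL1 V + entrywiseL1 H := by
  simp only [entrywiseL1, ← sum_add_distrib]
  gcongr with p _ q _
  exact abs_add_le _ _

lemma mem_msubdiff_entrywiseL1 {Φ V : Matrix (Fin d) (Fin d) ℝ} (hΦ : ∀ p q, |Φ p q| ≤ 1)
    (hΦV : ∀ p q, Φ p q * V p q = |V p q|) : Φ ∈ msubdiff entrywiseL1 V := by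
  intro H
  simp only [frobInner, entrywiseL1, ← sum_sub_distrib, Matrix.add_apply]
  gcongr with p _ q _
  exact mul_le_abs_add_sub_abs (hΦ p q) (hΦV p q) (H p q)

def signPattern (V H : Matrix (Fin d) (Fin d) ℝ) : Matrix (Fin d) (Fin d) ℝ :=
  Matrix.of fun p q => if V p q = 0 then (sign (H p q) : ℝ) else sign (V p q)

lemma abs_signPattern_apply_le_one (V H : Matrix (Fin d) (Fin d) ℝ) (p q : Fin d) :
    |signPattern V H p q| ≤ 1 := by
  rw [signPattern, Matrix.of_apply]
  split_ifs <;> exact abs_signType_coe_le_one _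

lemma signPattern_mem_msubdiff (V H : Matrix (Fin d) (Fin d) ℝ) :
    signPattern V H ∈ msubdiff entrywiseL1 V :=
  mem_msubdiff_entrywiseL1 (abs_signPattern_apply_le_one V H) fun p q => by
    by_cases hV : V p q = 0 <;> simp [signPattern, hV]

lemma entrywiseL1_sub_le_frobInner_signPattern {V : Matrix (Fin d) (Fin d) ℝ} {T : Finset (Fin d)}
    (hV : ∀ p q, V p q ≠ 0 → p ∈ T ∧ q ∈ T) (H : Matrix (Fin d) (Fin d) ℝ) :
    entrywiseL1 H - 2 * ∑ p ∈ T, ∑ q ∈ T, |H p q| ≤ frobInner (signPattern V H) H := by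
  have hpt : ∀ p q, |H p q| - 2 * (if p ∈ T ∧ q ∈ T then |H p q| else 0) ≤
      signPattern V H p q * H p q := by
    intro p q
    by_cases hVpq : V p q = 0
    · have : signPattern V H p q * H p q = |H p q| := by simp [signPattern, hVpq]
      split_ifs <;> linarith [abs_nonneg (H p q)]
    · have := (abs_le.1 (abs_mul_le_abs_of_abs_le_one
        (abs_signPattern_apply_le_one V H p q) (H p q))).1
      rw [if_pos (hV p q hVpq)]
      linarith
  calc entrywiseL1 H - 2 * ∑ p ∈ T, ∑ q ∈ T, |H p q|
      = ∑ p, ∑ q, (|H p q| - 2 * (if p ∈ T ∧ q ∈ T then |H p q| else 0)) := by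
        simp only [entrywiseL1, sum_sub_distrib, ← mul_sum, ite_and, sum_ite_irrel,
          sum_const_zero, Fintype.sum_ite_mem]
    _ ≤ frobInner (signPattern V H) H := by
        unfold frobInner
        gcongr with p _ q _
        exact hpt p q

end EntrywiseL1

lemma sum_sum_abs_le_card_mul_sqrt_frobNormSq {d : ℕ} (H : Matrix (Fin d) (Fin d) ℝ)
    (T : Finset (Fin d)) : ∑ p ∈ T, ∑ q ∈ T, |H p q| ≤ #T * √(frobNormSq H) := by
  have hsq : ∑ pq ∈ T ×ˢ T, H pq.1 pq.2 ^ 2 ≤ frobNormSq H := by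
    rw [sum_product]
    exact (sum_le_sum fun p _ => sum_le_univ_sum_of_nonneg fun q => sq_nonneg (H p q)).trans
      (sum_le_univ_sum_of_nonneg fun p => sum_nonneg fun q _ => sq_nonneg (H p q))
  have hcs : (∑ pq ∈ T ×ˢ T, |H pq.1 pq.2|) ^ 2 ≤ (#T * √(frobNormSq H)) ^ 2 := by
    calc (∑ pq ∈ T ×ˢ T, |H pq.1 pq.2|) ^ 2
        ≤ #(T ×ˢ T) * ∑ pq ∈ T ×ˢ T, |H pq.1 pq.2| ^ 2 := sq_sum_le_card_mul_sum_sq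
      _ ≤ #T ^ 2 * frobNormSq H := by
        simp only [sq_abs]
        rw [card_product, Nat.cast_mul, ← sq]
        gcongr
      _ = (#T * √(frobNormSq H)) ^ 2 := by
        rw [mul_pow, Real.sq_sqrt (by unfold frobNormSq; positivity)]
  rw [← sum_product' (f := fun p q => |H p q|)]
  exact (pow_le_pow_iff_left₀ (by positivity) (by positivity) two_ne_zero).1 hcs

theorem sparse_PCA_l1_sparsity_equation_general
    {Ω : Type*} [MeasurableSpace Ω] (μ : Measure Ω)
    {N d : ℕ}
    (P : Measure (Fin d → ℝ))
    (X : Fin N → Ω → Fin d → ℝ)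
    (k : ℕ) (β : Fin d → ℝ)
    (hsparse : Nat.card {i : Fin d // β i ≠ 0} ≤ k)
    (Zs : Matrix (Fin d) (Fin d) ℝ)
    (hZs : Zs = Matrix.of fun i j => β i * β j)
    (C : Set (Matrix (Fin d) (Fin d) ℝ))
    (A δ : ℝ)
    (ρ : ℝ)
    (hρ : 10 * k * Real.sqrt (rstarPCA μ P X C Zs entrywiseL1 A ρ δ) ≤ ρ) :
    ∀ Z ∈ C, entrywiseL1 (Z - Zs) = ρ →
      frobNormSq (Z - Zs) ≤ rstarPCA μ P X C Zs entrywiseL1 A ρ δ →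
      (4 / 5) * ρ ≤
        sSup ((fun Φ => frobInner Φ (Z - Zs)) '' mGamma entrywiseL1 Zs ρ) := by
  intro Z _ hL1 hFr
  set T : Finset (Fin d) := {i | β i ≠ 0}
  have hT : #T ≤ k := by rwa [Nat.card_eq_fintype_card, Fintype.card_subtype] at hsparse
  have hsupp : ∀ p q, Zs p q ≠ 0 → p ∈ T ∧ q ∈ T := by simp [hZs, T]
  have hΓ : signPattern Zs (Z - Zs) ∈ mGamma entrywiseL1 Zs ρ :=
    msubdiff_subset_mGamma
      (by rw [entrywiseL1_zero]; exact div_nonneg (hL1 ▸ entrywiseL1_nonneg _) (by norm_num))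
      (signPattern_mem_msubdiff _ _)
  have hS : ∑ p ∈ T, ∑ q ∈ T, |(Z - Zs) p q| ≤ k * √(rstarPCA μ P X C Zs entrywiseL1 A ρ δ) :=
    (sum_sum_abs_le_card_mul_sqrt_frobNormSq _ T).trans
      (mul_le_mul (by exact_mod_cast hT) (Real.sqrt_le_sqrt hFr) (Real.sqrt_nonneg _)
        (Nat.cast_nonneg _))
  calc 4 / 5 * ρ ≤ ρ - 2 * ∑ p ∈ T, ∑ q ∈ T, |(Z - Zs) p q| := by linarith
    _ ≤ frobInner (signPattern Zs (Z - Zs)) (Z - Zs) :=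
      hL1 ▸ entrywiseL1_sub_le_frobInner_signPattern hsupp _
    _ ≤ _ := le_csSup (bddAbove_image_frobInner_mGamma entrywiseL1_add_le _ _ _) ⟨_, hΓ, rfl⟩

/-- Lemma: for sparse PCA with `ℓ₁` regularization, any `ρ ≥ 10k√(r*(ρ))`
satisfies the `A`-sparsity equation. -/
theorem sparse_PCA_l1_sparsity_equation
    {Ω : Type*} [MeasurableSpace Ω] (μ : Measure Ω) [IsProbabilityMeasure μ]
    {N d : ℕ} (hN : 0 < N) (hd : 0 < d)
    (P : Measure (Fin d → ℝ)) [IsProbabilityMeasure P]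
    (X : Fin N → Ω → Fin d → ℝ)
    (hXmeas : ∀ i, Measurable (X i))
    (hXindep : iIndepFun X μ)
    (hXdist : ∀ i, μ.map (X i) = P)
    (k : ℕ) (β : Fin d → ℝ)
    (hsparse : Nat.card {i : Fin d // β i ≠ 0} ≤ k)
    (hunit : ∑ i, (β i) ^ 2 = 1)
    (Zs : Matrix (Fin d) (Fin d) ℝ)
    (hZs : Zs = Matrix.of fun i j => β i * β j)
    (C : Set (Matrix (Fin d) (Fin d) ℝ))
    (hC : C = {Z | Z.PosSemidef ∧ Z.trace = 1})
    (A δ : ℝ) (hA : 0 < A) (hδ0 : 0 < δ) (hδ1 : δ < 1)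
    (ρ : ℝ) (hρpos : 0 < ρ)
    (hρ : 10 * k * Real.sqrt (rstarPCA μ P X C Zs entrywiseL1 A ρ δ) ≤ ρ) :
    ∀ Z ∈ C, entrywiseL1 (Z - Zs) = ρ →
      frobNormSq (Z - Zs) ≤ rstarPCA μ P X C Zs entrywiseL1 A ρ δ →
      (4 / 5) * ρ ≤
        sSup ((fun Φ => frobInner Φ (Z - Zs)) '' mGamma entrywiseL1 Zs ρ) :=
  sparse_PCA_l1_sparsity_equation_general μ P X k β hsparse Zs hZs C A δ ρ hρ
end
end
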